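/- Define learning rates α_t = (H+1)/(H+t) for t ≥ 1, and weights α_t^i = α_i · ∏_{j=i+1}^t (1 − α_j) for 1 ≤ i ≤ t. Then for every i ≥ 1: ∑_{t=i}^∞ α_t^i = 1 + 1/H. -/

import Mathlib

/-- Learning rate `α_t = (H+1)/(H+t)`. -/
noncomputable def lr (H t : ℕ) : ℝ := (H + 1) / (H + t)

/-- Weight `α_t^i = α_i ∏_{j=i+1}^t (1 - α_j)`. -/
noncomputable def lrW (H t i : ℕ) : ℝ :=
  lr H i * ∏ j ∈ Finset.Icc (i + 1) t, (1 - lr H j)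

/-!
With `W t = α_t^i`, the recursion `W (t+1) = W t · t / (H+t+1)` shows that
`T t = W t · (H+t) / H` satisfies `T t - T (t+1) = W t` for `t ≥ i`, so the series telescopes
to `T i = 1 + 1/H` provided `T t → 0`. The latter holds because `t · T t` is non-increasing
for `H ≥ 1`, so `T t = O(1/t)`.
-/

open Filter Topology

theorem Antitone.hasSum_sub_succ {f : ℕ → ℝ} {l : ℝ} (hf : Antitone f)
    (hlim : Tendsto f atTop (𝓝 l)) : HasSum (fun n ↦ f n - f (n + 1)) (f 0 - l) := by
  rw [hasSum_iff_tendsto_nat_of_nonneg fun n ↦ sub_nonneg.2 (hf n.le_succ)]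
  simp only [Finset.sum_range_sub']
  exact tendsto_const_nhds.sub hlim

theorem tendsto_zero_of_nonneg_of_natCast_mul_le {f : ℕ → ℝ} {C : ℝ} (h0 : ∀ n, 0 ≤ f n)
    (hC : ∀ n : ℕ, n * f n ≤ C) : Tendsto f atTop (𝓝 0) := by
  refine squeeze_zero' (.of_forall h0) ?_ (tendsto_const_div_atTop_nhds_zero_nat C)
  filter_upwards [eventually_gt_atTop 0] with n hn
  rw [le_div_iff₀ (by positivity), mul_comm]
  exact hC n

section LearningRate

variable {H i t : ℕ}

theorem lr_nonneg : 0 ≤ lr H t := by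
  unfold lr; positivity

theorem lr_le_one (ht : 1 ≤ t) : lr H t ≤ 1 := by
  have : (1 : ℝ) ≤ t := by exact_mod_cast ht
  unfold lr
  rw [div_le_one (by positivity)]
  linarith

theorem one_sub_lr_succ : 1 - lr H (t + 1) = t / (H + t + 1) := by
  unfold lr
  push_cast
  field_simp
  ring

theorem lrW_self : lrW H i i = lr H i := by
  simp [lrW]

theorem lrW_succ (h : i ≤ t) : lrW H (t + 1) i = lrW H t i * (t / (H + t + 1)) := by
  rw [lrW, Finset.prod_Icc_succ_top (by omega), one_sub_lr_succ, ← mul_assoc, ← lrW]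

theorem lrW_nonneg : 0 ≤ lrW H t i :=
  mul_nonneg lr_nonneg <| Finset.prod_nonneg fun j hj ↦
    sub_nonneg.2 <| lr_le_one (by simp only [Finset.mem_Icc] at hj; omega)

variable (H i) in
/-- The tail `∑_{s ≥ max i t} α_s^i`, in closed form. -/
noncomputable def lrTail (t : ℕ) : ℝ :=
  lrW H (max i t) i * (H + (max i t : ℕ)) / H

theorem lrTail_nonneg : 0 ≤ lrTail H i t := by
  unfold lrTail
  have := lrW_nonneg (H := H) (t := max i t) (i := i)
  positivity

theorem lrTail_zero (hH : H ≠ 0) : lrTail H i 0 = 1 + 1 / H := by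
  have hH' : (H : ℝ) ≠ 0 := by exact_mod_cast hH
  rw [lrTail, Nat.max_zero, lrW_self, lr]
  field_simp

theorem lrTail_succ_of_le (h : i ≤ t) : lrTail H i (t + 1) = lrW H t i * t / H := by
  have hden : (H : ℝ) + t + 1 ≠ 0 := by positivity
  rw [lrTail, max_eq_right (by omega), lrW_succ h]
  push_cast
  field_simp
  ring

theorem lrTail_sub_succ (hH : H ≠ 0) (t : ℕ) :
    lrTail H i t - lrTail H i (t + 1) = if i ≤ t then lrW H t i else 0 := by
  split_ifs with h
  · have hH' : (H : ℝ) ≠ 0 := by exact_mod_cast hH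
    rw [lrTail_succ_of_le h, lrTail, max_eq_right h]
    field_simp
    ring
  · rw [lrTail, lrTail, max_eq_left (by omega), max_eq_left (by omega), sub_self]

theorem lrTail_antitone (hH : H ≠ 0) : Antitone (lrTail H i) :=
  antitone_nat_of_succ_le fun t ↦ sub_nonneg.1 <| by
    rw [lrTail_sub_succ hH]
    split_ifs
    exacts [lrW_nonneg, le_rfl]

theorem max_mul_lrTail_succ_le (hH : 1 ≤ H) (t : ℕ) :
    ((max i (t + 1) : ℕ) : ℝ) * lrTail H i (t + 1) ≤ (max i t : ℕ) * lrTail H i t := by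
  rcases le_or_gt i t with h | h
  · have hH' : (1 : ℝ) ≤ H := by exact_mod_cast hH
    have hWt : 0 ≤ lrW H t i * t := mul_nonneg lrW_nonneg t.cast_nonneg
    rw [lrTail_succ_of_le h, lrTail, max_eq_right h, max_eq_right (by omega)]
    push_cast
    rw [mul_div_assoc', mul_div_assoc']
    gcongr ?_ / _
    nlinarith
  · rw [lrTail, lrTail, max_eq_left h.le, max_eq_left h]

theorem natCast_mul_lrTail_le (hH : 1 ≤ H) (t : ℕ) : t * lrTail H i t ≤ i * lrTail H i 0 :=
  calc (t : ℝ) * lrTail H i t ≤ (max i t : ℕ) * lrTail H i t := by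
        gcongr
        · exact lrTail_nonneg
        · exact le_max_right i t
    _ ≤ (max i 0 : ℕ) * lrTail H i 0 :=
        antitone_nat_of_succ_le (f := fun t ↦ ((max i t : ℕ) : ℝ) * lrTail H i t)
          (max_mul_lrTail_succ_le hH) (Nat.zero_le t)
    _ = i * lrTail H i 0 := by rw [Nat.max_zero]

theorem lrTail_tendsto_zero (hH : 1 ≤ H) : Tendsto (lrTail H i) atTop (𝓝 0) :=
  tendsto_zero_of_nonneg_of_natCast_mul_le (fun _ ↦ lrTail_nonneg) (natCast_mul_lrTail_le hH)

end LearningRate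

theorem stmt6_general (H : ℕ) (hH : 1 ≤ H) (i : ℕ) :
    ∑' t : ℕ, (if i ≤ t then lrW H t i else 0) = 1 + 1 / (H : ℝ) := by
  have hH0 : H ≠ 0 := by omega
  have hsum := (lrTail_antitone (i := i) hH0).hasSum_sub_succ (lrTail_tendsto_zero hH)
  simp only [lrTail_sub_succ hH0, lrTail_zero hH0, sub_zero] at hsum
  exact hsum.tsum_eq

theorem stmt6 (H : ℕ) (hH : 1 ≤ H) (i : ℕ) (hi : 1 ≤ i) :
    ∑' t : ℕ, (if i ≤ t then lrW H t i else 0) = 1 + 1 / (H : ℝ) :=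
  stmt6_general H hH i
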